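/- arXiv:2408.03317 — 2 statements merged into one kernel-verified Lean document; each statement's English description precedes it below -/
import Mathlib

section
/- Let M and N be nests on a separable Hilbert space with d(M, N) < 1, and let θ : M → N be the order isomorphism sending each P ∈ M to the unique Q ∈ N with ‖P − Q‖ < 1. Then θ preserves dimension: for P₁ ≤ P₂ in M, rank(P₂ − P₁) = rank(θ(P₂) − θ(P₁)). -/
/-! If `F₁ F₂ = 0`, `F₂` and `E₂` are idempotent and `‖(1 - F₁) E₁‖, ‖(1 - F₂) E₂‖ < 1`, then
`ker F₁ ⊓ ker F₂` embeds linearly into `range (1 - E₁ - E₂)`: correct `x` by `S x`, where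
`S = F₂ E₂ (1 - (1 - F₂) E₂)⁻¹` takes values in `range F₂` and satisfies `E₂ S = E₂`, then apply
`1 - E₁ - E₂`; the bound on `(1 - F₁) E₁` makes this injective. As `range (P₂ - P₁)` lies in
`ker P₁ ⊓ ker (1 - P₂)`, comparing the pairs `(P₁, 1 - P₂)` and `(Q₁, 1 - Q₂)` in both directions
gives the equality of ranks. When `Q₂ ≤ Q₁` the pair `(Q₂, 1 - Q₁)` replaces the second one and
yields the rank of `Q₁ - Q₂ = -(Q₂ - Q₁)`. -/

open ContinuousLinearMap

/-- A nest on a Hilbert space: a chain of orthogonal projections containing `0` and `1`,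
closed under arbitrary intersections (infima of ranges) and closed spans (closures of
suprema of ranges). -/
structure IsNest {H : Type*} [NormedAddCommGroup H] [InnerProductSpace ℂ H]
    [CompleteSpace H] (𝒩 : Set (H →L[ℂ] H)) : Prop where
  selfAdjoint : ∀ P ∈ 𝒩, IsSelfAdjoint P
  idem : ∀ P ∈ 𝒩, P ∘L P = P
  chain : ∀ P ∈ 𝒩, ∀ Q ∈ 𝒩, Q ∘L P = P ∨ P ∘L Q = Q
  zero_mem : 0 ∈ 𝒩
  one_mem : 1 ∈ 𝒩
  inf_mem : ∀ S ⊆ 𝒩, ∃ P ∈ 𝒩, LinearMap.range (P : H →ₗ[ℂ] H) = ⨅ Q ∈ S, LinearMap.range (Q : H →ₗ[ℂ] H)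
  sup_mem : ∀ S ⊆ 𝒩, ∃ P ∈ 𝒩,
    LinearMap.range (P : H →ₗ[ℂ] H) = (⨆ Q ∈ S, LinearMap.range (Q : H →ₗ[ℂ] H)).topologicalClosure

theorem norm_one_sub_mul_lt_one {R : Type*} [NormedRing R] {e f g : R} (hge : g * e = e)
    (he : ‖e‖ ≤ 1) (hfg : ‖f - g‖ < 1) : ‖(1 - f) * e‖ < 1 := by
  have : (1 - f) * e = -((f - g) * e) := by rw [← neg_mul, neg_sub, sub_mul, sub_mul, one_mul, hge]
  calc ‖(1 - f) * e‖ = ‖(f - g) * e‖ := by rw [this, norm_neg]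
    _ ≤ ‖f - g‖ * ‖e‖ := norm_mul_le _ _
    _ ≤ ‖f - g‖ := mul_le_of_le_one_right (norm_nonneg _) he
    _ < 1 := hfg

theorem IsSelfAdjoint.mul_eq_left_of_mul_eq_right {R : Type*} [Mul R] [StarMul R] {p q : R}
    (hp : IsSelfAdjoint p) (hq : IsSelfAdjoint q) (h : q * p = p) : p * q = p := by
  simpa [hp.star_eq, hq.star_eq] using congr(star $h)

section Banach

variable {𝕜 X : Type*} [NontriviallyNormedField 𝕜] [NormedAddCommGroup X] [NormedSpace 𝕜 X]

theorem ContinuousLinearMap.eq_zero_of_apply_eq_self {T : X →L[𝕜] X} (hT : ‖T‖ < 1) {x : X}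
    (hx : T x = x) : x = 0 := by
  by_contra hne
  have hpos : 0 < ‖x‖ := norm_pos_iff.mpr hne
  have : ‖x‖ ≤ ‖T‖ * ‖x‖ := by simpa only [hx] using T.le_opNorm x
  nlinarith

theorem range_sub_le_ker_inf_ker_one_sub {P₁ P₂ : X →L[𝕜] X} (hP₁ : IsIdempotentElem P₁)
    (hP₂ : IsIdempotentElem P₂) (h₁₂ : P₁ * P₂ = P₁) (h₂₁ : P₂ * P₁ = P₁) :
    LinearMap.range ((P₂ - P₁ : X →L[𝕜] X) : X →ₗ[𝕜] X) ≤
      LinearMap.ker (P₁ : X →ₗ[𝕜] X) ⊓ LinearMap.ker ((1 - P₂ : X →L[𝕜] X) : X →ₗ[𝕜] X) := by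
  rintro _ ⟨x, rfl⟩
  refine Submodule.mem_inf.mpr ⟨?_, ?_⟩
  · change (P₁ * (P₂ - P₁)) x = 0
    rw [mul_sub, h₁₂, hP₁.eq, sub_self, zero_apply]
  · change ((1 - P₂) * (P₂ - P₁)) x = 0
    rw [one_sub_mul, mul_sub, hP₂.eq, h₂₁, sub_self, zero_apply]

variable [CompleteSpace X]

theorem rank_ker_inf_ker_le_rank_range_one_sub_sub {E₁ E₂ F₁ F₂ : X →L[𝕜] X}
    (hE₂ : IsIdempotentElem E₂) (hF₂ : IsIdempotentElem F₂) (hF : F₁ * F₂ = 0)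
    (h₁ : ‖(1 - F₁) * E₁‖ < 1) (h₂ : ‖(1 - F₂) * E₂‖ < 1) :
    Module.rank 𝕜 ↥(LinearMap.ker (F₁ : X →ₗ[𝕜] X) ⊓ LinearMap.ker (F₂ : X →ₗ[𝕜] X)) ≤
      Module.rank 𝕜 (LinearMap.range ((1 - E₁ - E₂ : X →L[𝕜] X) : X →ₗ[𝕜] X)) := by
  set u := Units.oneSub _ h₂
  set S : X →L[𝕜] X := F₂ * E₂ * ↑u⁻¹
  have hE₂S : E₂ * S = E₂ := by
    have : E₂ * F₂ * E₂ = E₂ * ↑u := by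
      simp only [u, Units.val_oneSub, mul_sub, mul_one, ← mul_assoc, hE₂.eq, sub_mul, one_mul]
      abel
    simp only [S, ← mul_assoc, this, Units.mul_inv_cancel_right]
  have hF₂S : F₂ * S = S := by simp only [S, ← mul_assoc, hF₂.eq]
  have hF₁S : F₁ * S = 0 := by simp only [S, ← mul_assoc, hF, zero_mul]
  let φ := ((1 - E₁ - E₂ : X →L[𝕜] X) : X →ₗ[𝕜] X).rangeRestrict ∘ₗ
    ((1 - S : X →L[𝕜] X) : X →ₗ[𝕜] X) ∘ₗ (LinearMap.ker (F₁ : X →ₗ[𝕜] X) ⊓ LinearMap.ker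
      (F₂ : X →ₗ[𝕜] X)).subtype
  refine LinearMap.rank_le_of_injective φ ((injective_iff_map_eq_zero φ).mpr ?_)
  rintro ⟨x, hx⟩ hφx
  replace hφx : (1 - E₁ - E₂) (x - S x) = 0 := congrArg Subtype.val hφx
  obtain ⟨hx₁, hx₂⟩ : F₁ x = 0 ∧ F₂ x = 0 := Submodule.mem_inf.mp hx
  set z := x - S x
  have hE₂z : E₂ z = 0 := by rw [map_sub, ← mul_apply_eq_comp, hE₂S, sub_self]
  have hF₁z : F₁ z = 0 := by rw [map_sub, ← mul_apply_eq_comp, hF₁S, hx₁, zero_apply, sub_zero]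
  have hE₁z : E₁ z = z := by
    rw [sub_apply, sub_apply, one_apply_eq_self, hE₂z, sub_zero, sub_eq_zero] at hφx
    exact hφx.symm
  have hz : z = 0 := eq_zero_of_apply_eq_self h₁ <| by
    rw [mul_apply_eq_comp, hE₁z, sub_apply, one_apply_eq_self, hF₁z, sub_zero]
  have hxS : S x = x := (sub_eq_zero.mp hz).symm
  ext1
  calc x = F₂ (S x) := by rw [← mul_apply_eq_comp, hF₂S, hxS]
    _ = 0 := by rw [hxS, hx₂]

end Banach

theorem rank_range_sub_le_of_norm_sub_lt_one {𝕜 H : Type*} [RCLike 𝕜] [NormedAddCommGroup H]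
    [InnerProductSpace 𝕜 H] [CompleteSpace H] {P₁ P₂ A B C D : H →L[𝕜] H}
    (hP₁ : IsStarProjection P₁) (hP₂ : IsStarProjection P₂) (hP : P₂ * P₁ = P₁)
    (hA : IsStarProjection A) (hB : IsStarProjection B)
    (hCA : C * A = A) (hC : ‖P₁ - C‖ < 1) (hDB : D * B = D) (hD : ‖P₂ - D‖ < 1) :
    Module.rank 𝕜 (LinearMap.range ((P₂ - P₁ : H →L[𝕜] H) : H →ₗ[𝕜] H)) ≤
      Module.rank 𝕜 (LinearMap.range ((B - A : H →L[𝕜] H) : H →ₗ[𝕜] H)) := by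
  have hP' := hP₁.isSelfAdjoint.mul_eq_left_of_mul_eq_right hP₂.isSelfAdjoint hP
  have h₁ : ‖(1 - P₁) * A‖ < 1 := norm_one_sub_mul_lt_one hCA (hA.norm_le A) hC
  have h₂ : ‖(1 - (1 - P₂)) * (1 - B)‖ < 1 := by
    refine norm_one_sub_mul_lt_one (g := 1 - D) ?_ (hB.one_sub.norm_le _) ?_
    · rw [one_sub_mul, mul_one_sub, hDB, sub_self, sub_zero]
    · rwa [sub_sub_sub_cancel_left, norm_sub_rev]
  have key := rank_ker_inf_ker_le_rank_range_one_sub_sub hB.one_sub.isIdempotentElem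
    hP₂.one_sub.isIdempotentElem (by rw [mul_one_sub, hP', sub_self]) h₁ h₂
  rw [show (1 - A - (1 - B) : H →L[𝕜] H) = B - A by abel] at key
  exact (Submodule.rank_mono (range_sub_le_ker_inf_ker_one_sub hP₁.isIdempotentElem
    hP₂.isIdempotentElem hP' hP)).trans key

theorem IsNest.isStarProjection {H : Type*} [NormedAddCommGroup H] [InnerProductSpace ℂ H]
    [CompleteSpace H] {𝒩 : Set (H →L[ℂ] H)} (h𝒩 : IsNest 𝒩) {P : H →L[ℂ] H} (hP : P ∈ 𝒩) :
    IsStarProjection P :=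
  ⟨h𝒩.idem P hP, h𝒩.selfAdjoint P hP⟩

theorem stmt12_general {H : Type*} [NormedAddCommGroup H] [InnerProductSpace ℂ H]
    [CompleteSpace H]
    (𝒨 𝒩 : Set (H →L[ℂ] H)) (hM : IsNest 𝒨) (hN : IsNest 𝒩)
    (P₁ P₂ : H →L[ℂ] H) (hP₁ : P₁ ∈ 𝒨) (hP₂ : P₂ ∈ 𝒨) (hle : P₂ ∘L P₁ = P₁)
    (Q₁ Q₂ : H →L[ℂ] H) (hQ₁ : Q₁ ∈ 𝒩) (hQ₂ : Q₂ ∈ 𝒩)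
    (h1 : ‖P₁ - Q₁‖ < 1) (h2 : ‖P₂ - Q₂‖ < 1) :
    Module.rank ℂ (LinearMap.range ((P₂ - P₁ : H →L[ℂ] H) : H →ₗ[ℂ] H)) =
      Module.rank ℂ (LinearMap.range ((Q₂ - Q₁ : H →L[ℂ] H) : H →ₗ[ℂ] H)) := by
  have hp₁ := hM.isStarProjection hP₁
  have hp₂ := hM.isStarProjection hP₂
  have hq₁ := hN.isStarProjection hQ₁
  have hq₂ := hN.isStarProjection hQ₂
  have h1' : ‖Q₁ - P₁‖ < 1 := by rwa [norm_sub_rev]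
  have h2' : ‖Q₂ - P₂‖ < 1 := by rwa [norm_sub_rev]
  rcases hN.chain Q₁ hQ₁ Q₂ hQ₂ with hQ | hQ
  · exact le_antisymm
      (rank_range_sub_le_of_norm_sub_lt_one hp₁ hp₂ hle hq₁ hq₂ hq₁.isIdempotentElem.eq h1
        hq₂.isIdempotentElem.eq h2)
      (rank_range_sub_le_of_norm_sub_lt_one hq₁ hq₂ hQ hp₁ hp₂ hp₁.isIdempotentElem.eq h1'
        hp₂.isIdempotentElem.eq h2')
  · have hQ' := hq₂.isSelfAdjoint.mul_eq_left_of_mul_eq_right hq₁.isSelfAdjoint hQ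
    have hle' := hp₁.isSelfAdjoint.mul_eq_left_of_mul_eq_right hp₂.isSelfAdjoint hle
    rw [← neg_sub Q₁, toLinearMap_neg, LinearMap.range_neg]
    exact le_antisymm
      (rank_range_sub_le_of_norm_sub_lt_one hp₁ hp₂ hle hq₂ hq₁ hQ h1 hQ' h2)
      (rank_range_sub_le_of_norm_sub_lt_one hq₂ hq₁ hQ hp₁ hp₂ hle h2' hle' h1')

/-- If nests `𝒨`, `𝒩` on a separable Hilbert space are at Hausdorff distance `< 1`, the
order isomorphism matching each `P` with the unique `Q` at distance `< 1` preserves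
dimension: if `P₁ ≤ P₂` in `𝒨` and `Q₁, Q₂ ∈ 𝒩` with `‖Pᵢ - Qᵢ‖ < 1`, then
`rank (P₂ - P₁) = rank (Q₂ - Q₁)`. -/
theorem stmt12 {H : Type*} [NormedAddCommGroup H] [InnerProductSpace ℂ H]
    [CompleteSpace H] [TopologicalSpace.SeparableSpace H]
    (𝒨 𝒩 : Set (H →L[ℂ] H)) (hM : IsNest 𝒨) (hN : IsNest 𝒩)
    (hdist : Metric.hausdorffDist 𝒨 𝒩 < 1)
    (P₁ P₂ : H →L[ℂ] H) (hP₁ : P₁ ∈ 𝒨) (hP₂ : P₂ ∈ 𝒨) (hle : P₂ ∘L P₁ = P₁)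
    (Q₁ Q₂ : H →L[ℂ] H) (hQ₁ : Q₁ ∈ 𝒩) (hQ₂ : Q₂ ∈ 𝒩)
    (h1 : ‖P₁ - Q₁‖ < 1) (h2 : ‖P₂ - Q₂‖ < 1) :
    Module.rank ℂ (LinearMap.range ((P₂ - P₁ : H →L[ℂ] H) : H →ₗ[ℂ] H)) =
      Module.rank ℂ (LinearMap.range ((Q₂ - Q₁ : H →L[ℂ] H) : H →ₗ[ℂ] H)) :=
  stmt12_general 𝒨 𝒩 hM hN P₁ P₂ hP₁ hP₂ hle Q₁ Q₂ hQ₁ hQ₂ h1 h2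
end

section
/- Let M, N be nests on H. For any P ∈ M and Q ∈ N, d(T(M), T(N)) ≥ ‖PᗮQ‖ · ‖PQᗮ‖. -/
open ContinuousLinearMap

/-- The nest algebra of a nest `𝒩`: all operators leaving every subspace of the nest
invariant, i.e. `(1 - P) A P = 0` for all `P ∈ 𝒩`. -/
def nestAlg {H : Type*} [NormedAddCommGroup H] [InnerProductSpace ℂ H]
    [CompleteSpace H] (𝒩 : Set (H →L[ℂ] H)) : Set (H →L[ℂ] H) :=
  {A | ∀ P ∈ 𝒩, (1 - P) ∘L A ∘L P = 0}

/-- The Kadison–Kastler distance between two sets of operators: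
`max (sup_{A ∈ b₁(𝒜)} d(A, ℬ)) (sup_{B ∈ b₁(ℬ)} d(B, 𝒜))`. -/
noncomputable def kkDist {H : Type*} [NormedAddCommGroup H] [InnerProductSpace ℂ H]
    [CompleteSpace H] (𝒜 ℬ : Set (H →L[ℂ] H)) : ℝ :=
  max (⨆ T : {T : H →L[ℂ] H // T ∈ 𝒜 ∧ ‖T‖ ≤ 1}, Metric.infDist T.1 ℬ)
      (⨆ T : {T : H →L[ℂ] H // T ∈ ℬ ∧ ‖T‖ ≤ 1}, Metric.infDist T.1 𝒜)

section Aux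

variable {H : Type*} [NormedAddCommGroup H] [InnerProductSpace ℂ H] [CompleteSpace H]

private lemma proj_contract {T : H →L[ℂ] H} (hsa : IsSelfAdjoint T) (hid : T ∘L T = T)
    (z : H) : ‖T z‖ ≤ ‖z‖ := by
  rcases eq_or_ne (T z) 0 with h | h
  · simp [h]
  have hadj : ContinuousLinearMap.adjoint T = T := isSelfAdjoint_iff'.mp hsa
  have h1 : (inner ℂ (T z) (T z) : ℂ) = inner ℂ z (T z) := by
    have := ContinuousLinearMap.adjoint_inner_left T (T z) z
    rw [hadj] at this
    rw [this, show T (T z) = T z from DFunLike.congr_fun hid z]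
  have h2 : ‖T z‖ * ‖T z‖ ≤ ‖z‖ * ‖T z‖ := by
    have := norm_inner_le_norm (𝕜 := ℂ) z (T z)
    calc ‖T z‖ * ‖T z‖ = ‖(inner ℂ (T z) (T z) : ℂ)‖ := by
          rw [inner_self_eq_norm_sq_to_K (𝕜 := ℂ) (T z)]
          simp [sq]
      _ = ‖(inner ℂ z (T z) : ℂ)‖ := by rw [h1]
      _ ≤ ‖z‖ * ‖T z‖ := this
  exact le_of_mul_le_mul_right h2 (norm_pos_iff.mpr h)

private lemma zero_mem_nestAlg (𝒩 : Set (H →L[ℂ] H)) : (0 : H →L[ℂ] H) ∈ nestAlg 𝒩 := by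
  intro R hR; simp

private lemma kk_key (𝒨 𝒩 : Set (H →L[ℂ] H)) (hM : IsNest 𝒨) (hN : IsNest 𝒩)
    (P Q : H →L[ℂ] H) (hP : P ∈ 𝒨) (hQ : Q ∈ 𝒩) (x y : H)
    (hx : ‖x‖ ≤ 1) (hy : ‖y‖ ≤ 1) (hne0 : (1 - P) (Q x) ≠ 0) :
    ‖(1 - P) (Q x)‖ * ‖(1 - Q) (P y)‖ ≤ kkDist (nestAlg 𝒨) (nestAlg 𝒩) := by
  have hPsa := hM.selfAdjoint P hP
  have hQsa := hN.selfAdjoint Q hQ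
  have hPid := hM.idem P hP
  have hQid := hN.idem Q hQ
  have hPcsa : IsSelfAdjoint (1 - P) := (IsSelfAdjoint.one (H →L[ℂ] H)).sub hPsa
  have hQcsa : IsSelfAdjoint (1 - Q) := (IsSelfAdjoint.one (H →L[ℂ] H)).sub hQsa
  have hPcid : (1 - P) ∘L (1 - P) = 1 - P := by
    ext z
    simp [ContinuousLinearMap.comp_apply, sub_apply, one_apply, map_sub,
      DFunLike.congr_fun hPid z]
  have hQcid : (1 - Q) ∘L (1 - Q) = 1 - Q := by
    ext z
    simp [ContinuousLinearMap.comp_apply, sub_apply, one_apply, map_sub,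
      DFunLike.congr_fun hQid z]
  have hPcon : ∀ z, ‖P z‖ ≤ ‖z‖ := proj_contract hPsa hPid
  have hQcon : ∀ z, ‖Q z‖ ≤ ‖z‖ := proj_contract hQsa hQid
  have hPccon : ∀ z, ‖(1 - P) z‖ ≤ ‖z‖ := proj_contract hPcsa hPcid
  have hQccon : ∀ z, ‖(1 - Q) z‖ ≤ ‖z‖ := proj_contract hQcsa hQcid
  set ξ : H := (1 - P) (Q x) with hxi
  set u : H := (‖ξ‖ : ℂ)⁻¹ • ξ with hu
  have hxin : (‖ξ‖ : ℂ) ≠ 0 := by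
    simpa using norm_ne_zero_iff.mpr hne0
  have hun : ‖u‖ = 1 := by
    rw [hu, norm_smul, norm_inv]
    simp [norm_ne_zero_iff.mpr hne0]
  set X : H →L[ℂ] H := (innerSL ℂ u).smulRight y with hX
  set A : H →L[ℂ] H := P ∘L (X ∘L (1 - P)) with hA
  have hAapp : ∀ z, A z = (inner ℂ u ((1 - P) z) : ℂ) • P y := by
    intro z
    simp [hA, hX, ContinuousLinearMap.comp_apply, smulRight_apply, innerSL_apply_apply,
      map_smul, inner_sub_right, sub_smul]
  have hAnorm : ‖A‖ ≤ 1 := by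
    refine opNorm_le_bound A zero_le_one fun z => ?_
    rw [hAapp z, one_mul, norm_smul]
    calc ‖(inner ℂ u ((1 - P) z) : ℂ)‖ * ‖P y‖
        ≤ (‖u‖ * ‖(1 - P) z‖) * ‖y‖ := by
          gcongr
          · exact norm_inner_le_norm _ _
          · exact (hPcon y).trans (le_refl _)
      _ ≤ (1 * ‖z‖) * 1 := by
          rw [hun]
          gcongr
          · exact hPccon z
      _ = ‖z‖ := by ring
  have hAmem : A ∈ nestAlg 𝒨 := by
    intro P' hP'
    rcases hM.chain P hP P' hP' with h | h
    · ext z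
      have h1 : ∀ w, P' (P w) = P w := fun w => DFunLike.congr_fun h w
      simp [hA, ContinuousLinearMap.comp_apply, sub_apply, one_apply, h1]
    · ext z
      have h1 : P (P' z) = P' z := DFunLike.congr_fun h z
      simp [hA, ContinuousLinearMap.comp_apply, sub_apply, one_apply, h1]
  have hinner : (inner ℂ u ξ : ℂ) = (‖ξ‖ : ℂ) := by
    rw [hu, inner_smul_left, inner_self_eq_norm_sq_to_K]
    rw [map_inv₀, Complex.conj_ofReal]
    field_simp
    norm_cast
  have hlow : ∀ B ∈ nestAlg 𝒩, ‖ξ‖ * ‖(1 - Q) (P y)‖ ≤ dist A B := by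
    intro B hB
    have hBQ : (1 - Q) (B (Q x)) = 0 := by
      have := DFunLike.congr_fun (hB Q hQ) x
      simpa [ContinuousLinearMap.comp_apply] using this
    have hAx : (1 - Q) (A (Q x)) = (‖ξ‖ : ℂ) • (1 - Q) (P y) := by
      rw [hAapp (Q x), ← hxi, hinner, map_smul]
    calc ‖ξ‖ * ‖(1 - Q) (P y)‖ = ‖(1 - Q) ((A - B) (Q x))‖ := by
          rw [ContinuousLinearMap.sub_apply A B (Q x), map_sub, hBQ, sub_zero, hAx, norm_smul,
            Complex.norm_real, Real.norm_eq_abs, abs_norm]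
      _ ≤ ‖(A - B) (Q x)‖ := hQccon _
      _ ≤ ‖A - B‖ * ‖Q x‖ := le_opNorm _ _
      _ ≤ ‖A - B‖ * 1 := by
          gcongr
          exact (hQcon x).trans hx
      _ = dist A B := by rw [mul_one, dist_eq_norm]
  have hne : (nestAlg 𝒩).Nonempty := ⟨0, zero_mem_nestAlg 𝒩⟩
  have hinf : ‖ξ‖ * ‖(1 - Q) (P y)‖ ≤ Metric.infDist A (nestAlg 𝒩) := by
    by_contra hcon
    push_neg at hcon
    rw [Metric.infDist_lt_iff hne] at hcon
    obtain ⟨B, hB, hBd⟩ := hcon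
    exact absurd (hlow B hB) (not_le.mpr hBd)
  have hbdd : BddAbove (Set.range fun T : {T : H →L[ℂ] H // T ∈ nestAlg 𝒨 ∧ ‖T‖ ≤ 1} =>
      Metric.infDist T.1 (nestAlg 𝒩)) := by
    refine ⟨1, ?_⟩
    rintro r ⟨T, rfl⟩
    calc Metric.infDist T.1 (nestAlg 𝒩) ≤ dist T.1 0 :=
          Metric.infDist_le_dist_of_mem (zero_mem_nestAlg 𝒩)
      _ = ‖T.1‖ := by simp [dist_eq_norm]
      _ ≤ 1 := T.2.2
  have hsup : Metric.infDist A (nestAlg 𝒩) ≤ kkDist (nestAlg 𝒨) (nestAlg 𝒩) :=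
    le_trans (le_ciSup hbdd ⟨A, hAmem, hAnorm⟩) (le_max_left _ _)
  exact hinf.trans hsup

end Aux

/-- Lower bound for the Kadison–Kastler distance between nest algebras: for any `P ∈ 𝒨`
and `Q ∈ 𝒩`, `‖Pᗮ Q‖ ⬝ ‖P Qᗮ‖ ≤ d(𝒯(𝒨), 𝒯(𝒩))`. -/
theorem stmt15 {H : Type*} [NormedAddCommGroup H] [InnerProductSpace ℂ H]
    [CompleteSpace H]
    (𝒨 𝒩 : Set (H →L[ℂ] H)) (hM : IsNest 𝒨) (hN : IsNest 𝒩)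
    (P Q : H →L[ℂ] H) (hP : P ∈ 𝒨) (hQ : Q ∈ 𝒩) :
    ‖(1 - P) ∘L Q‖ * ‖P ∘L (1 - Q)‖ ≤ kkDist (nestAlg 𝒨) (nestAlg 𝒩) := by
  have hPsa := hM.selfAdjoint P hP
  have hQsa := hN.selfAdjoint Q hQ
  have hadjP : ContinuousLinearMap.adjoint P = P := isSelfAdjoint_iff'.mp hPsa
  have hadjQc : ContinuousLinearMap.adjoint (1 - Q) = 1 - Q :=
    isSelfAdjoint_iff'.mp ((IsSelfAdjoint.one (H →L[ℂ] H)).sub hQsa)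
  have hnormeq : ‖P ∘L (1 - Q)‖ = ‖(1 - Q) ∘L P‖ := by
    conv_lhs => rw [← ContinuousLinearMap.adjoint.norm_map (P ∘L (1 - Q))]
    rw [ContinuousLinearMap.adjoint_comp, hadjP, hadjQc]
  rw [hnormeq]
  have hD0 : 0 ≤ kkDist (nestAlg 𝒨) (nestAlg 𝒩) := by
    have hbdd : BddAbove (Set.range fun T : {T : H →L[ℂ] H // T ∈ nestAlg 𝒨 ∧ ‖T‖ ≤ 1} =>
        Metric.infDist T.1 (nestAlg 𝒩)) := by
      refine ⟨1, ?_⟩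
      rintro r ⟨T, rfl⟩
      calc Metric.infDist T.1 (nestAlg 𝒩) ≤ dist T.1 0 :=
            Metric.infDist_le_dist_of_mem (zero_mem_nestAlg 𝒩)
        _ = ‖T.1‖ := by simp [dist_eq_norm]
        _ ≤ 1 := T.2.2
    refine le_trans Metric.infDist_nonneg
      (le_trans (le_ciSup hbdd ⟨0, zero_mem_nestAlg 𝒨, by simp⟩) (le_max_left _ _))
  set f : H →L[ℂ] H := (1 - P) ∘L Q with hf
  set g : H →L[ℂ] H := (1 - Q) ∘L P with hg
  refine le_of_forall_lt fun c hc => ?_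
  rcases lt_or_ge c 0 with hc0 | hc0
  · exact lt_of_lt_of_le hc0 hD0
  have hprod : 0 < ‖f‖ * ‖g‖ := lt_of_le_of_lt hc0 hc
  rcases mul_pos_iff.mp hprod with ⟨hfb, hgb⟩ | ⟨hfb, hgb⟩
  swap
  · exact absurd hfb (not_lt.mpr (norm_nonneg _))
  have h1 : c / ‖g‖ < ‖f‖ := (div_lt_iff₀ hgb).mpr hc
  obtain ⟨x, hx1, hx2⟩ := f.exists_lt_apply_of_lt_opNorm h1
  have hfx : 0 < ‖f x‖ := lt_of_le_of_lt (div_nonneg hc0 hgb.le) hx2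
  have h2 : c / ‖f x‖ < ‖g‖ := by
    rw [div_lt_iff₀ hfx]
    calc c = (c / ‖g‖) * ‖g‖ := (div_mul_cancel₀ c hgb.ne').symm
      _ < ‖f x‖ * ‖g‖ := mul_lt_mul_of_pos_right hx2 hgb
      _ = ‖g‖ * ‖f x‖ := mul_comm _ _
  obtain ⟨y, hy1, hy2⟩ := g.exists_lt_apply_of_lt_opNorm h2
  have hfxne : (1 - P) (Q x) ≠ 0 := by
    intro h0
    have : f x = 0 := by rw [hf]; simpa [ContinuousLinearMap.comp_apply] using h0
    rw [this] at hfx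
    simp at hfx
  have key := kk_key 𝒨 𝒩 hM hN P Q hP hQ x y hx1.le hy1.le hfxne
  have hfxeq : f x = (1 - P) (Q x) := rfl
  have hgyeq : g y = (1 - Q) (P y) := rfl
  calc c = (c / ‖f x‖) * ‖f x‖ := (div_mul_cancel₀ c hfx.ne').symm
    _ < ‖g y‖ * ‖f x‖ := mul_lt_mul_of_pos_right hy2 hfx
    _ = ‖f x‖ * ‖g y‖ := mul_comm _ _
    _ ≤ kkDist (nestAlg 𝒨) (nestAlg 𝒩) := by rw [hfxeq, hgyeq]; exact key
end
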